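/- Let \(L_1 \le L_0 = \mathbb{Z}^n\) be a sublattice of finite index \(m\), and let \(C\) be an \(L_1\)-periodic cut of type \(\gamma = (\gamma_1, \ldots, \gamma_{n+1})\) with \(\gamma_i > 0\) for all \(i\). Then there is no infinite directed path in the cut quiver \(\hat{Q}_C\) (the quiver with vertices \(L_0\) and only the non-cut arrows). Equivalently, the finite quotient quiver \(Q_C\) on \(L_0/L_1\) is acyclic. -/
import Mathlib


open scoped Classical

noncomputable section

/-- Vertices of the universal cover quiver: the lattice `L₀ = ℤⁿ`. -/
abbrev V (n : ℕ) := Fin n → ℤ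

/-- The vectors `α₁, …, αₙ` (standard basis) and `α_{n+1} = -∑ αᵢ`. -/
def alphav (n : ℕ) (i : Fin (n + 1)) : V n :=
  if h : (i : ℕ) < n then Pi.single ⟨i, h⟩ 1 else fun _ => -1

/-- An arrow of `Q̂` is a pair (source, type): the arrow `x → x + αᵢ`. -/
abbrev Arrow (n : ℕ) := V n × Fin (n + 1)

/-- The list of arrows of the path starting at `x` with list of types `l`. -/
def pathArrows (n : ℕ) : V n → List (Fin (n + 1)) → List (Arrow n)
  | _, [] => []
  | x, i :: l => (x, i) :: pathArrows n (x + alphav n i) l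

/-- An elementary cycle: length `n+1`, pairwise distinct types, closed. -/
def IsElemCycle (n : ℕ) (l : List (Fin (n + 1))) : Prop :=
  l.length = n + 1 ∧ l.Nodup ∧ (l.map (alphav n)).sum = 0

/-- A cut: every elementary cycle passes through exactly one arrow of `C`. -/
def IsCut (n : ℕ) (C : Set (Arrow n)) : Prop :=
  ∀ (x : V n) (l : List (Fin (n + 1))), IsElemCycle n l →
    ∃! a : Arrow n, a ∈ pathArrows n x l ∧ a ∈ C

/-- Height increment of a single arrow. -/
def hInc (n : ℕ) (C : Set (Arrow n)) (a : Arrow n) : ℤ :=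
  if a ∈ C then -(n : ℤ) else 1

/-- Height increment along the path from `x` with types `l`. -/
def pathH (n : ℕ) (C : Set (Arrow n)) (x : V n) (l : List (Fin (n + 1))) : ℤ :=
  ((pathArrows n x l).map (hInc n C)).sum

/-- A height function. -/
def IsHeight (n : ℕ) (h : V n → ℤ) : Prop :=
  h 0 = 0 ∧ ∀ (x : V n) (i : Fin (n + 1)),
    h (x + alphav n i) = h x + 1 ∨ h (x + alphav n i) = h x - n

/-- The cut associated to a height function. -/
def cutOf (n : ℕ) (h : V n → ℤ) : Set (Arrow n) :=
  {a | h (a.1 + alphav n a.2) = h a.1 - n}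

/-- `L₁`-periodicity of a set of arrows. -/
def IsPeriodic (n : ℕ) (L1 : AddSubgroup (V n)) (C : Set (Arrow n)) : Prop :=
  ∀ a : Arrow n, ∀ y ∈ L1, (a ∈ C ↔ (a.1 + y, a.2) ∈ C)

/-- The type of a periodic cut: the number of `L₁`-orbits of cut arrows of type `i`. -/
def typeCount (n : ℕ) (L1 : AddSubgroup (V n)) (C : Set (Arrow n)) (i : Fin (n + 1)) : ℕ :=
  Nat.card ((QuotientAddGroup.mk (s := L1)) '' {x : V n | (x, i) ∈ C})

end

section AuxLemmas

variable {n : ℕ} {C : Set (Arrow n)}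

def psum (n : ℕ) (l : List (Fin (n+1))) : V n := (l.map (alphav n)).sum

noncomputable def cnt (n : ℕ) (C : Set (Arrow n)) (x : V n) (l : List (Fin (n+1))) : ℕ :=
  (pathArrows n x l).countP (fun a => decide (a ∈ C))

variable {n : ℕ} {C : Set (Arrow n)}

lemma cnt_nil (x : V n) : cnt n C x [] = 0 := rfl

lemma cnt_cons (x : V n) (i : Fin (n+1)) (l : List (Fin (n+1))) :
    cnt n C x (i :: l) = (if (x, i) ∈ C then 1 else 0) + cnt n C (x + alphav n i) l := by
  simp [cnt, pathArrows, List.countP_cons]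
  by_cases h : (x, i) ∈ C <;> simp [h] <;> omega

lemma pathArrows_append (x : V n) (l₁ l₂ : List (Fin (n+1))) :
    pathArrows n x (l₁ ++ l₂) = pathArrows n x l₁ ++ pathArrows n (x + psum n l₁) l₂ := by
  induction l₁ generalizing x with
  | nil => simp [pathArrows, psum]
  | cons i l ih => simp [pathArrows, psum, ih, add_assoc]

lemma cnt_append (x : V n) (l₁ l₂ : List (Fin (n+1))) :
    cnt n C x (l₁ ++ l₂) = cnt n C x l₁ + cnt n C (x + psum n l₁) l₂ := by
  simp [cnt, pathArrows_append, List.countP_append]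

lemma snd_mem_of_mem_pathArrows {a : Arrow n} {x : V n} {l : List (Fin (n+1))}
    (h : a ∈ pathArrows n x l) : a.2 ∈ l := by
  induction l generalizing x with
  | nil => simp [pathArrows] at h
  | cons i l ih =>
    rcases List.mem_cons.mp h with h | h
    · simp [h]
    · exact List.mem_cons_of_mem _ (ih h)

lemma nodup_pathArrows {l : List (Fin (n+1))} (hl : l.Nodup) (x : V n) :
    (pathArrows n x l).Nodup := by
  induction l generalizing x with
  | nil => exact List.nodup_nil
  | cons i l ih =>
    rcases List.nodup_cons.mp hl with ⟨hi, hl'⟩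
    refine List.nodup_cons.mpr ⟨fun hmem => ?_, ih hl' _⟩
    exact hi (snd_mem_of_mem_pathArrows hmem)

lemma countP_single_nodup {α : Type*} [DecidableEq α] {a : α} : ∀ {l : List α}, l.Nodup → a ∈ l →
    l.countP (fun b => decide (b = a)) = 1 := by
  intro l
  induction l with
  | nil => intro _ h; simp at h
  | cons b l ih =>
    intro hnd hal
    rcases List.nodup_cons.mp hnd with ⟨hb, hl⟩
    rcases List.mem_cons.mp hal with h | h
    · subst h
      have : l.countP (fun b => decide (b = a)) = 0 :=
        List.countP_eq_zero.mpr (by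
          intro x hx
          simp only [decide_eq_true_eq]
          exact fun hxa => hb (hxa ▸ hx))
      simp [List.countP_cons, this]
    · have hba : b ≠ a := fun e => hb (e ▸ h)
      simp [List.countP_cons, ih hl h, hba]

lemma countP_eq_one_of_existsUnique {l : List (Arrow n)} (hnd : l.Nodup)
    (h : ∃! a : Arrow n, a ∈ l ∧ a ∈ C) :
    l.countP (fun a => decide (a ∈ C)) = 1 := by
  obtain ⟨a, ⟨hal, haC⟩, hu⟩ := h
  have hfilter : l.filter (fun a => decide (a ∈ C)) = l.filter (fun b => decide (b = a)) := by
    apply List.filter_congr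
    intro b hb
    by_cases hbC : b ∈ C
    · simp [hbC, hu b ⟨hb, hbC⟩, haC]
    · have hba : b ≠ a := fun e => hbC (e ▸ haC)
      simp [hbC, hba]
  rw [List.countP_eq_length_filter, hfilter, ← List.countP_eq_length_filter]
  exact countP_single_nodup hnd hal

lemma sum_alphav (n : ℕ) : ∑ i : Fin (n+1), alphav n i = 0 := by
  rw [Fin.sum_univ_castSucc]
  have h1 : ∀ i : Fin n, alphav n i.castSucc = Pi.single i 1 := by
    intro i
    simp [alphav, Fin.is_lt, Fin.castSucc]
  have h2 : alphav n (Fin.last n) = fun _ => -1 := by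
    simp [alphav]
  rw [h2]
  funext j
  simp [h1, Finset.sum_apply, Pi.single_apply]


lemma pair_swap (hC : IsCut n C) (x : V n) (i j : Fin (n+1)) :
    (if (x, i) ∈ C then 1 else 0) + (if (x + alphav n i, j) ∈ C then 1 else 0)
  = (if (x, j) ∈ C then 1 else 0) + (if (x + alphav n j, i) ∈ C then 1 else 0) := by
  rcases eq_or_ne i j with rfl | hij
  · rfl
  set r := (List.finRange (n+1)).filter (fun k => decide (k ≠ i ∧ k ≠ j)) with hr
  have hrnd : r.Nodup := (List.nodup_finRange _).filter _
  have hir : i ∉ r := by simp [hr]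
  have hjr : j ∉ r := by simp [hr]
  have hnd1 : (i :: j :: r).Nodup := by
    simp [List.nodup_cons, hij, hir, hjr, hrnd]
  have hperm : (i :: j :: r).Perm (List.finRange (n+1)) := by
    apply List.perm_of_nodup_nodup_toFinset_eq hnd1 (List.nodup_finRange _)
    ext k
    by_cases h1 : k = i
    · simp [h1]
    by_cases h2 : k = j
    · simp [h2]
    simp [hr, h1, h2, List.mem_finRange]
  have hsum : ((i :: j :: r).map (alphav n)).sum = 0 := by
    rw [(hperm.map (alphav n)).sum_eq]
    rw [show ((List.finRange (n+1)).map (alphav n)).sum = ∑ k : Fin (n+1), alphav n k from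
      (Fin.sum_univ_def (alphav n)).symm]
    exact sum_alphav n
  have hcyc1 : IsElemCycle n (i :: j :: r) :=
    ⟨by simpa using hperm.length_eq, hnd1, hsum⟩
  have hperm2 : (j :: i :: r).Perm (i :: j :: r) := List.Perm.swap i j r
  have hcyc2 : IsElemCycle n (j :: i :: r) :=
    ⟨by rw [hperm2.length_eq]; simpa using hperm.length_eq, hperm2.nodup_iff.mpr hnd1,
      by rw [(hperm2.map (alphav n)).sum_eq]; exact hsum⟩
  have e1 : cnt n C x (i :: j :: r) = 1 :=
    countP_eq_one_of_existsUnique (nodup_pathArrows hcyc1.2.1 x) (hC x _ hcyc1)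
  have e2 : cnt n C x (j :: i :: r) = 1 :=
    countP_eq_one_of_existsUnique (nodup_pathArrows hcyc2.2.1 x) (hC x _ hcyc2)
  rw [cnt_cons, cnt_cons] at e1 e2
  rw [show x + alphav n j + alphav n i = x + alphav n i + alphav n j from add_right_comm ..]
    at e2
  omega

lemma cnt_swap (hC : IsCut n C) (x : V n) (a b : Fin (n+1)) (l : List (Fin (n+1))) :
    cnt n C x (a :: b :: l) = cnt n C x (b :: a :: l) := by
  rw [cnt_cons, cnt_cons, cnt_cons, cnt_cons]
  rw [show x + alphav n b + alphav n a = x + alphav n a + alphav n b from add_right_comm ..]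
  have := pair_swap hC x a b
  omega

lemma cnt_perm (hC : IsCut n C) {l₁ l₂ : List (Fin (n+1))} (h : l₁.Perm l₂) :
    ∀ x, cnt n C x l₁ = cnt n C x l₂ := by
  induction h with
  | nil => intro x; rfl
  | cons a h ih => intro x; rw [cnt_cons, cnt_cons, ih]
  | swap a b l => intro x; exact cnt_swap hC x b a l
  | trans h1 h2 ih1 ih2 => intro x; rw [ih1, ih2]

lemma alphav_castSucc (i : Fin n) : alphav n i.castSucc = Pi.single i 1 := by
  simp [alphav, Fin.is_lt, Fin.castSucc]


end AuxLemmas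

/-- a periodic cut of positive type has no infinite path in its cut
quiver. -/
theorem stmt_10 (n m : ℕ) (hn : 1 ≤ n) (hm : 0 < m)
    (L1 : AddSubgroup (V n)) (hidx : L1.index = m)
    (C : Set (Arrow n)) (hC : IsCut n C) (hper : IsPeriodic n L1 C)
    (hpos : ∀ i : Fin (n + 1), 0 < typeCount n L1 C i) :
    ¬ ∃ (v : ℕ → V n) (t : ℕ → Fin (n + 1)),
        (∀ k, v (k + 1) = v k + alphav n (t k)) ∧ ∀ k, (v k, t k) ∉ C := by
  rintro ⟨v, t, hstep, hnc⟩
  have hfin : Finite (V n ⧸ L1) := by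
    have hpos' : 0 < Nat.card (V n ⧸ L1) := by
      rw [← AddSubgroup.index_eq_card, hidx]; exact hm
    exact (Nat.card_pos_iff.mp hpos').2
  obtain ⟨k, k', hne, heq⟩ := Finite.exists_ne_map_eq_of_infinite
      (fun k : ℕ => (QuotientAddGroup.mk (v k) : V n ⧸ L1))
  wlog hk : k < k' generalizing k k'
  · exact this k' k hne.symm heq.symm (hne.lt_or_gt.resolve_left hk)
  -- the two key path computations
  have key : ∀ (d a : ℕ),
      pathArrows n (v a) ((List.range d).map (fun j => t (a + j)))
        = (List.range d).map (fun j => (v (a + j), t (a + j)))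
      ∧ v (a + d) = v a + psum n ((List.range d).map (fun j => t (a + j))) := by
    intro d
    induction d with
    | zero => intro a; simp [pathArrows, psum]
    | succ d ih =>
      intro a
      rw [List.range_succ]
      simp only [List.map_append, List.map_cons, List.map_nil]
      constructor
      · rw [pathArrows_append, (ih a).1, ← (ih a).2]
        simp [pathArrows]
      · have : psum n ((List.range d).map (fun j => t (a + j)) ++ [t (a + d)])
            = psum n ((List.range d).map (fun j => t (a + j))) + alphav n (t (a + d)) := by
          simp [psum]
        rw [this, show a + (d+1) = (a+d)+1 from rfl, hstep (a + d), (ih a).2, add_assoc]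
  set p := k' - k with hp
  have hp1 : k' = k + p := by omega
  set l0 : List (Fin (n+1)) := (List.range p).map (fun j => t (k + j)) with hl0
  have hy : psum n l0 ∈ L1 := by
    have h2 := (key p k).2
    rw [← hp1] at h2
    have h3 : psum n l0 = -v k + v k' := by rw [h2]; abel
    rw [h3]
    exact (QuotientAddGroup.eq (s := L1)).mp heq
  have g0 : cnt n C (v k) l0 = 0 := by
    rw [cnt, hl0, (key p k).1]
    apply List.countP_eq_zero.mpr
    intro a ha
    simp only [List.mem_map, List.mem_range] at ha
    obtain ⟨j, _, rfl⟩ := ha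
    simpa using hnc (k + j)
  have hco : ∀ (x : V n) (jj : Fin (n+1)),
      cnt n C (x + alphav n jj) l0 = cnt n C x l0 := by
    intro x jj
    have h1 : cnt n C x (jj :: l0)
        = (if (x, jj) ∈ C then 1 else 0) + cnt n C (x + alphav n jj) l0 := cnt_cons ..
    have h2 : cnt n C x (l0 ++ [jj]) = cnt n C x l0 + cnt n C (x + psum n l0) [jj] :=
      cnt_append ..
    have h3 : cnt n C x (l0 ++ [jj]) = cnt n C x (jj :: l0) :=
      cnt_perm hC (List.perm_append_singleton jj l0) x
    have h4 : cnt n C (x + psum n l0) [jj] = (if (x, jj) ∈ C then 1 else 0) := by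
      rw [cnt_cons, cnt_nil]
      have hiff := hper (x, jj) (psum n l0) hy
      by_cases h : (x, jj) ∈ C
      · simp [h, hiff.mp h]
      · have h' : (x + psum n l0, jj) ∉ C := fun hc => h (hiff.mpr hc)
        simp [h, h']
    omega
  let H : AddSubgroup (V n) :=
    { carrier := {w | ∀ x, cnt n C (x + w) l0 = cnt n C x l0}
      zero_mem' := by intro x; rw [add_zero]
      add_mem' := by
        intro a b ha hb x
        rw [← add_assoc, hb (x + a), ha x]
      neg_mem' := by
        intro a ha x
        have h := ha (x + -a)
        rw [neg_add_cancel_right] at h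
        exact h.symm }
  have hgen : ∀ i : Fin n, (Pi.single i 1 : V n) ∈ H := by
    intro i
    have := hco (jj := i.castSucc)
    rw [alphav_castSucc] at this
    exact fun x => this x
  have hall : ∀ (w : V n) (x : V n), cnt n C (x + w) l0 = cnt n C x l0 := by
    intro w
    have hw : w ∈ H := by
      have hrepr : w = ∑ i : Fin n, w i • (Pi.single i 1 : V n) := by
        funext j
        simp [Finset.sum_apply, Pi.single_apply, mul_ite]
      rw [hrepr]
      exact AddSubgroup.sum_mem H (fun i _ => AddSubgroup.zsmul_mem H (hgen i) (w i))
    exact hw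
  have hz : ∀ z : V n, cnt n C z l0 = 0 := by
    intro z
    have h := hall (z - v k) (v k)
    rw [show v k + (z - v k) = z from by abel] at h
    rw [h, g0]
  have hhead : ∃ l', l0 = t k :: l' := by
    obtain ⟨d, hd⟩ : ∃ d, p = d + 1 := ⟨p - 1, by omega⟩
    refine ⟨(List.range d).map (fun j => t (k + 1 + j)), ?_⟩
    rw [hl0, hd, List.range_succ_eq_map]
    simp only [List.map_cons, List.map_map, Nat.add_zero]
    congr 1
    apply List.map_congr_left
    intro j _
    simp [Function.comp]
    congr 1
    omega
  obtain ⟨l', hl'⟩ := hhead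
  have hS : {x : V n | (x, t k) ∈ C} = ∅ := by
    ext z
    simp only [Set.mem_setOf_eq, Set.mem_empty_iff_false, iff_false]
    intro hzC
    have h := hz z
    rw [hl', cnt_cons] at h
    simp [hzC] at h
  have h0 : typeCount n L1 C (t k) = 0 := by
    unfold typeCount
    rw [hS]
    simp
  have := hpos (t k)
  omega
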